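/- arXiv:2111.02800 — 3 statements merged into one kernel-verified Lean document; each statement's English description precedes it below -/
import Mathlib

section
/- For every Borel probability measure μ on the unit sphere S² of ℝ³ and every C ∈ [0,1], the following chain of inequalities holds: g(C,μ) ≥ ‖Ξ(μ)‖ + (1 − ‖Ξ(μ)‖)·C ≥ (1 + 2C)/3 ≥ C, where ‖Ξ(μ)‖ is the largest eigenvalue of the verification matrix Ξ(μ). -/
open MeasureTheory Real
open scoped ENNReal

noncomputable section

abbrev E3 := EuclideanSpace ℝ (Fin 3)

/-- The unit sphere S² in ℝ³. -/
def unitSphere : Set E3 := Metric.sphere (0 : E3) 1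

/-- `g C μ` is the supremum over unit vectors `v` of `∫ √(C² + (1−C²)⟨r,v⟩²) dμ(r)`. -/
def g (C : ℝ) (μ : Measure E3) : ℝ :=
  ⨆ v : unitSphere, ∫ r, Real.sqrt (C ^ 2 + (1 - C ^ 2) * (inner ℝ r (v : E3) : ℝ) ^ 2) ∂μ


/-- The verification matrix `Ξ(μ) = ∫ r rᵀ dμ(r)` (entrywise integral). -/
def Xi (μ : Measure E3) : Matrix (Fin 3) (Fin 3) ℝ :=
  Matrix.of fun i j => ∫ r, r i * r j ∂μ

/-!
Let `v` be a unit eigenvector of `Ξ(μ)` for its largest eigenvalue `λ`. Then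
`∫ ⟨r,v⟩² dμ = vᵀ Ξ(μ) v = λ`, and for `t² ≤ 1` the concavity of the square root gives
`√(C² + (1 − C²) t²) ≥ C + (1 − C) t²`; integrating at `v` yields `g(C,μ) ≥ C + (1 − C) λ`.
Since `μ` lives on the sphere, `tr Ξ(μ) = ∫ ‖r‖² dμ = 1`, so `λ ≥ 1/3`, which gives the other two
inequalities.
-/

open scoped InnerProductSpace

-- The difference of the squares is `(1 - C)² t² (1 - t²)`.
lemma add_mul_sq_le_sqrt_sq_add_mul_sq {C t : ℝ} (hC₀ : 0 ≤ C) (hC₁ : C ≤ 1) (ht : t ^ 2 ≤ 1) :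
    C + (1 - C) * t ^ 2 ≤ √(C ^ 2 + (1 - C ^ 2) * t ^ 2) := by
  rw [Real.le_sqrt (by nlinarith [sq_nonneg t]) (by nlinarith [sq_nonneg t])]
  nlinarith [mul_nonneg (mul_nonneg (sq_nonneg (1 - C)) (sq_nonneg t)) (sub_nonneg.2 ht)]

lemma sqrt_sq_add_mul_sq_le_one {C t : ℝ} (hC : C ^ 2 ≤ 1) (ht : t ^ 2 ≤ 1) :
    √(C ^ 2 + (1 - C ^ 2) * t ^ 2) ≤ 1 :=
  Real.sqrt_le_one.2 (by nlinarith [mul_le_mul_of_nonneg_left ht (sub_nonneg.2 hC)])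

lemma sq_inner_le_one {E : Type*} [NormedAddCommGroup E] [InnerProductSpace ℝ E] {r v : E}
    (hr : ‖r‖ ≤ 1) (hv : ‖v‖ ≤ 1) : ⟪r, v⟫_ℝ ^ 2 ≤ 1 :=
  (sq_le_one_iff_abs_le_one _).2 <|
    (abs_real_inner_le_norm r v).trans (mul_le_one₀ hr (norm_nonneg v) hv)

section UnitBall

variable {E : Type*} [NormedAddCommGroup E] [InnerProductSpace ℝ E] [MeasurableSpace E]
  [OpensMeasurableSpace E] {μ : Measure E}

lemma integrable_inner_sq [IsFiniteMeasure μ] (hμ : ∀ᵐ r ∂μ, ‖r‖ ≤ 1) {v : E} (hv : ‖v‖ ≤ 1) :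
    Integrable (fun r ↦ ⟪r, v⟫_ℝ ^ 2) μ := by
  refine .of_bound (by fun_prop) 1 ?_
  filter_upwards [hμ] with r hr
  rw [Real.norm_of_nonneg (sq_nonneg _)]
  exact sq_inner_le_one hr hv

lemma integrable_sqrt_sq_add_mul_sq_inner [IsFiniteMeasure μ] (hμ : ∀ᵐ r ∂μ, ‖r‖ ≤ 1) {C : ℝ}
    (hC : C ^ 2 ≤ 1) {v : E} (hv : ‖v‖ ≤ 1) :
    Integrable (fun r ↦ √(C ^ 2 + (1 - C ^ 2) * ⟪r, v⟫_ℝ ^ 2)) μ := by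
  refine .of_bound (by fun_prop) 1 ?_
  filter_upwards [hμ] with r hr
  rw [Real.norm_of_nonneg (Real.sqrt_nonneg _)]
  exact sqrt_sq_add_mul_sq_le_one hC (sq_inner_le_one hr hv)

variable [IsProbabilityMeasure μ] {C : ℝ} {v : E}

lemma integral_sqrt_sq_add_mul_sq_inner_le_one (hμ : ∀ᵐ r ∂μ, ‖r‖ ≤ 1) (hC : C ^ 2 ≤ 1)
    (hv : ‖v‖ ≤ 1) :
    ∫ r, √(C ^ 2 + (1 - C ^ 2) * ⟪r, v⟫_ℝ ^ 2) ∂μ ≤ 1 := by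
  calc ∫ r, √(C ^ 2 + (1 - C ^ 2) * ⟪r, v⟫_ℝ ^ 2) ∂μ ≤ ∫ _, (1 : ℝ) ∂μ :=
        integral_mono_ae (integrable_sqrt_sq_add_mul_sq_inner hμ hC hv) (integrable_const 1)
          (hμ.mono fun r hr ↦ sqrt_sq_add_mul_sq_le_one hC (sq_inner_le_one hr hv))
    _ = 1 := by simp

lemma add_mul_integral_inner_sq_le_integral_sqrt (hμ : ∀ᵐ r ∂μ, ‖r‖ ≤ 1) (hv : ‖v‖ ≤ 1)
    (hC₀ : 0 ≤ C) (hC₁ : C ≤ 1) :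
    C + (1 - C) * ∫ r, ⟪r, v⟫_ℝ ^ 2 ∂μ ≤ ∫ r, √(C ^ 2 + (1 - C ^ 2) * ⟪r, v⟫_ℝ ^ 2) ∂μ := by
  have hint := integrable_inner_sq hμ hv
  calc C + (1 - C) * ∫ r, ⟪r, v⟫_ℝ ^ 2 ∂μ = ∫ r, C + (1 - C) * ⟪r, v⟫_ℝ ^ 2 ∂μ := by
        rw [integral_add (integrable_const C) (hint.const_mul _), integral_const_mul]
        simp
    _ ≤ _ := integral_mono_ae ((integrable_const C).add (hint.const_mul _))
        (integrable_sqrt_sq_add_mul_sq_inner hμ (pow_le_one₀ hC₀ hC₁) hv)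
        (hμ.mono fun r hr ↦ add_mul_sq_le_sqrt_sq_add_mul_sq hC₀ hC₁ (sq_inner_le_one hr hv))

end UnitBall

section SecondMoment

open Matrix

variable {ι : Type*} [Fintype ι] {μ : Measure (EuclideanSpace ℝ ι)}

lemma integrable_apply_mul_apply [IsFiniteMeasure μ] (hμ : ∀ᵐ r ∂μ, ‖r‖ ≤ 1) (i j : ι) :
    Integrable (fun r : EuclideanSpace ℝ ι ↦ r i * r j) μ := by
  refine .of_bound (by fun_prop) 1 ?_
  filter_upwards [hμ] with r hr
  rw [norm_mul]
  exact mul_le_one₀ ((PiLp.norm_apply_le r i).trans hr) (norm_nonneg _)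
    ((PiLp.norm_apply_le r j).trans hr)

lemma integral_inner_sq_eq_dotProduct_mulVec [IsFiniteMeasure μ] (hμ : ∀ᵐ r ∂μ, ‖r‖ ≤ 1)
    (v : EuclideanSpace ℝ ι) :
    ∫ r, ⟪r, v⟫_ℝ ^ 2 ∂μ = ⇑v ⬝ᵥ (Matrix.of (fun i j ↦ ∫ r, r i * r j ∂μ) *ᵥ ⇑v) := by
  have hexpand : ∀ r : EuclideanSpace ℝ ι, ⟪r, v⟫_ℝ ^ 2 = ∑ i, ∑ j, v i * (r i * r j) * v j := by
    intro r
    simp only [EuclideanSpace.inner_eq_star_dotProduct, star_trivial, dotProduct, sq,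
      Finset.sum_mul_sum]
    exact Finset.sum_congr rfl fun i _ ↦ Finset.sum_congr rfl fun j _ ↦ by ring
  have hint := integrable_apply_mul_apply hμ
  simp only [hexpand, dotProduct, mulVec, of_apply, Finset.mul_sum]
  rw [integral_finsetSum _ fun i _ ↦ integrable_finsetSum _ fun j _ ↦
    ((hint i j).const_mul _).mul_const _]
  refine Finset.sum_congr rfl fun i _ ↦ ?_
  rw [integral_finsetSum _ fun j _ ↦ ((hint i j).const_mul _).mul_const _]
  refine Finset.sum_congr rfl fun j _ ↦ ?_
  rw [integral_mul_const, integral_const_mul]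
  ring

lemma trace_of_integral_apply_mul_apply_eq_one [IsProbabilityMeasure μ] (hμ : ∀ᵐ r ∂μ, ‖r‖ = 1) :
    (Matrix.of (fun i j ↦ ∫ r, r i * r j ∂μ)).trace = 1 := by
  have hint := integrable_apply_mul_apply (hμ.mono fun r hr ↦ hr.le)
  calc (Matrix.of (fun i j ↦ ∫ r, r i * r j ∂μ)).trace = ∫ r, ‖r‖ ^ 2 ∂μ := by
        simp only [trace, diag, of_apply, EuclideanSpace.real_norm_sq_eq]
        simp only [sq]
        exact (integral_finsetSum _ fun i _ ↦ hint i i).symm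
    _ = ∫ _, (1 : ℝ) ∂μ := integral_congr_ae (hμ.mono fun r hr ↦ by simp [hr])
    _ = 1 := by simp

end SecondMoment

namespace Matrix.IsHermitian

variable {n : Type*} [Fintype n] [DecidableEq n] {A : Matrix n n ℝ}

lemma trace_le_card_mul_iSup_eigenvalues (hA : A.IsHermitian) :
    A.trace ≤ Fintype.card n * ⨆ i, hA.eigenvalues i := by
  rw [hA.trace_eq_sum_eigenvalues]
  simp only [RCLike.ofReal_real_eq_id, id_eq]
  rw [← nsmul_eq_mul, ← Finset.card_univ]
  exact Finset.sum_le_card_nsmul _ _ _ fun i _ ↦ le_ciSup (Finite.bddAbove_range _) i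

lemma exists_norm_eq_one_dotProduct_mulVec_eq_iSup_eigenvalues [Nonempty n]
    (hA : A.IsHermitian) :
    ∃ v : EuclideanSpace ℝ n, ‖v‖ = 1 ∧ ⇑v ⬝ᵥ (A *ᵥ ⇑v) = ⨆ i, hA.eigenvalues i := by
  obtain ⟨i₀, hi₀⟩ := Finite.exists_max hA.eigenvalues
  refine ⟨hA.eigenvectorBasis i₀, hA.eigenvectorBasis.orthonormal.1 i₀, ?_⟩
  rw [le_antisymm (ciSup_le hi₀) (le_ciSup (Finite.bddAbove_range _) i₀), hA.eigenvalues_eq i₀]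
  simp

end Matrix.IsHermitian

lemma integral_le_g {μ : Measure E3} [IsProbabilityMeasure μ] (hμ : ∀ᵐ r ∂μ, ‖r‖ ≤ 1) {C : ℝ}
    (hC : C ^ 2 ≤ 1) {v : E3} (hv : v ∈ unitSphere) :
    ∫ r, √(C ^ 2 + (1 - C ^ 2) * ⟪r, v⟫_ℝ ^ 2) ∂μ ≤ g C μ :=
  le_ciSup (f := fun w : unitSphere ↦ ∫ r, √(C ^ 2 + (1 - C ^ 2) * ⟪r, (w : E3)⟫_ℝ ^ 2) ∂μ)
    ⟨1, Set.forall_mem_range.2 fun w ↦ integral_sqrt_sq_add_mul_sq_inner_le_one hμ hC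
      (mem_sphere_zero_iff_norm.1 w.2).le⟩ ⟨v, hv⟩

/-- For every Borel probability measure `μ` on the unit sphere S² of ℝ³ and every `C ∈ [0,1]`,
`g(C,μ) ≥ ‖Ξ(μ)‖ + (1 − ‖Ξ(μ)‖)·C ≥ (1 + 2C)/3 ≥ C`, where `‖Ξ(μ)‖` is the largest
eigenvalue of the (symmetric) verification matrix `Ξ(μ)`. -/
theorem g_lower_bounds (μ : Measure E3) [IsProbabilityMeasure μ] (hμ : μ unitSphereᶜ = 0)
    (hXi : (Xi μ).IsHermitian) (C : ℝ) (hC : C ∈ Set.Icc (0 : ℝ) 1) :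
    (⨆ i, hXi.eigenvalues i) + (1 - ⨆ i, hXi.eigenvalues i) * C ≤ g C μ ∧
    (1 + 2 * C) / 3 ≤ (⨆ i, hXi.eigenvalues i) + (1 - ⨆ i, hXi.eigenvalues i) * C ∧
    C ≤ (1 + 2 * C) / 3 := by
  obtain ⟨hC₀, hC₁⟩ := hC
  have hsphere : ∀ᵐ r ∂μ, ‖r‖ = 1 := by
    filter_upwards [mem_ae_iff.2 hμ] with r hr using mem_sphere_zero_iff_norm.1 hr
  have hball : ∀ᵐ r ∂μ, ‖r‖ ≤ 1 := hsphere.mono fun r hr ↦ hr.le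
  have hlam : 1 / 3 ≤ ⨆ i, hXi.eigenvalues i := by
    have htrace := hXi.trace_le_card_mul_iSup_eigenvalues
    rw [show (Xi μ).trace = 1 from trace_of_integral_apply_mul_apply_eq_one hsphere,
      Fintype.card_fin, Nat.cast_ofNat] at htrace
    linarith
  set lam := ⨆ i, hXi.eigenvalues i
  obtain ⟨v, hv, hvlam⟩ := hXi.exists_norm_eq_one_dotProduct_mulVec_eq_iSup_eigenvalues
  have hquad : ∫ r, ⟪r, v⟫_ℝ ^ 2 ∂μ = lam :=
    (integral_inner_sq_eq_dotProduct_mulVec hball v).trans hvlam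
  refine ⟨?_, by nlinarith, by linarith⟩
  calc lam + (1 - lam) * C = C + (1 - C) * ∫ r, ⟪r, v⟫_ℝ ^ 2 ∂μ := by
        rw [hquad]
        ring
    _ ≤ ∫ r, √(C ^ 2 + (1 - C ^ 2) * ⟪r, v⟫_ℝ ^ 2) ∂μ :=
        add_mul_integral_inner_sq_le_integral_sqrt hball hv.le hC₀ hC₁
    _ ≤ g C μ := integral_le_g hball (pow_le_one₀ hC₀ hC₁) (mem_sphere_zero_iff_norm.2 hv)
end
end

section
/- Let μ = p₁ δ_{r₁} + p₂ δ_{r₂} be a two-point probability measure on the unit sphere S² of ℝ³ (r₁, r₂ unit vectors, p₁, p₂ ≥ 0, p₁ + p₂ = 1). Then for every C ∈ [0,1], g(C,μ) ≥ √((1+C²)/2). Moreover, for 0 ≤ C < 1, equality holds if and only if r₁ and r₂ are orthogonal and p₁ = p₂ = 1/2. -/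
open MeasureTheory Real
open scoped ENNReal

noncomputable section

/-!
The bisector `v` of `r₁` and `±r₂` has `⟪rᵢ, v⟫² = (1 + |⟪r₁, r₂⟫|) / 2 ≥ 1 / 2` for both `i`,
which gives the lower bound, strictly unless `r₁ ⊥ r₂`. For orthonormal `r₁, r₂` and equal weights,
Bessel's inequality and the concavity of `√` give the reverse bound. For orthonormal `r₁, r₂` and
unequal weights, the value along the great circle through `r₁, r₂` is `p₁ √a + p₂ √(1 + C² - a)`,
whose derivative at the symmetric point `a = (1 + C²) / 2` does not vanish, so that point is not a
maximum.
-/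

open scoped RealInnerProductSpace

def gIntegrand (C x : ℝ) : ℝ := √(C ^ 2 + (1 - C ^ 2) * x ^ 2)

section GIntegrand
variable {C x y : ℝ}

lemma gIntegrand_le_one (hC : C ^ 2 ≤ 1) (hx : x ^ 2 ≤ 1) : gIntegrand C x ≤ 1 :=
  sqrt_le_one.mpr (by nlinarith [mul_le_mul_of_nonneg_left hx (sub_nonneg.2 hC)])

lemma sqrt_half_le_gIntegrand (hC : C ^ 2 ≤ 1) (hx : 1 / 2 ≤ x ^ 2) :
    √((1 + C ^ 2) / 2) ≤ gIntegrand C x :=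
  sqrt_le_sqrt (by nlinarith [mul_le_mul_of_nonneg_left hx (sub_nonneg.2 hC)])

lemma sqrt_half_lt_gIntegrand (hC : C ^ 2 < 1) (hx : 1 / 2 < x ^ 2) :
    √((1 + C ^ 2) / 2) < gIntegrand C x :=
  sqrt_lt_sqrt (by positivity) (by nlinarith [mul_lt_mul_of_pos_left hx (sub_pos.2 hC)])

lemma gIntegrand_add_gIntegrand_le (hC : C ^ 2 ≤ 1) (hxy : x ^ 2 + y ^ 2 ≤ 1) :
    gIntegrand C x / 2 + gIntegrand C y / 2 ≤ √((1 + C ^ 2) / 2) := by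
  have hnonneg : ∀ z : ℝ, 0 ≤ C ^ 2 + (1 - C ^ 2) * z ^ 2 := fun z => by
    have := mul_nonneg (sub_nonneg.2 hC) (sq_nonneg z)
    positivity
  calc gIntegrand C x / 2 + gIntegrand C y / 2
      ≤ √(1 / 2 * (C ^ 2 + (1 - C ^ 2) * x ^ 2) + 1 / 2 * (C ^ 2 + (1 - C ^ 2) * y ^ 2)) := by
        have := strictConcaveOn_sqrt.concaveOn.2 (Set.mem_Ici.2 (hnonneg x))
          (Set.mem_Ici.2 (hnonneg y)) (by norm_num : (0 : ℝ) ≤ 1 / 2)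
          (by norm_num : (0 : ℝ) ≤ 1 / 2) (by norm_num)
        simp only [smul_eq_mul] at this
        unfold gIntegrand
        linarith
    _ ≤ √((1 + C ^ 2) / 2) :=
        sqrt_le_sqrt (by nlinarith [mul_le_mul_of_nonneg_left hxy (sub_nonneg.2 hC)])

lemma gIntegrand_sqrt {a : ℝ} (hC : C ^ 2 < 1) (ha : C ^ 2 ≤ a) :
    gIntegrand C √((a - C ^ 2) / (1 - C ^ 2)) = √a := by
  rw [gIntegrand, sq_sqrt (div_nonneg (sub_nonneg.2 ha) (sub_pos.2 hC).le),
    mul_div_cancel₀ _ (sub_pos.2 hC).ne', add_sub_cancel]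

end GIntegrand

lemma eq_of_isLocalMax_mul_sqrt_add_mul_sqrt {p q K : ℝ} (hK : 0 < K)
    (h : IsLocalMax (fun a => p * √a + q * √(K - a)) (K / 2)) : p = q := by
  have hK2 : K / 2 ≠ 0 := by positivity
  have hderiv : HasDerivAt (fun a => p * √a + q * √(K - a))
      (p * (1 / (2 * √(K / 2))) + q * (-1 / (2 * √(K - K / 2)))) (K / 2) :=
    ((hasDerivAt_sqrt hK2).const_mul p).add
      ((((hasDerivAt_id _).const_sub K).sqrt (by simpa [sub_half] using hK2)).const_mul q)
  have hzero := h.hasDerivAt_eq_zero hderiv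
  rw [sub_half] at hzero
  have hs : 0 < √(K / 2) := sqrt_pos.2 (by positivity)
  field_simp at hzero
  linarith

section InnerProductSpace
variable {F : Type*} [NormedAddCommGroup F] [InnerProductSpace ℝ F] {r₁ r₂ : F}

lemma norm_smul_add_smul_sq (h₁ : ‖r₁‖ = 1) (h₂ : ‖r₂‖ = 1) (α β : ℝ) :
    ‖α • r₁ + β • r₂‖ ^ 2 = α ^ 2 + β ^ 2 + 2 * α * β * ⟪r₁, r₂⟫ := by
  rw [norm_add_sq_real, norm_smul, norm_smul, real_inner_smul_left, real_inner_smul_right, h₁,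
    h₂, mul_pow, mul_pow, norm_eq_abs, norm_eq_abs, sq_abs, sq_abs]
  ring

lemma inner_smul_add_smul_of_norm_eq_one (h₁ : ‖r₁‖ = 1) (α β : ℝ) :
    ⟪r₁, α • r₁ + β • r₂⟫ = α + β * ⟪r₁, r₂⟫ := by
  rw [inner_add_right, real_inner_smul_right, real_inner_smul_right,
    real_inner_self_eq_norm_sq, h₁]
  ring

lemma exists_bisector_of_inner_nonneg (h₁ : ‖r₁‖ = 1) (h₂ : ‖r₂‖ = 1) (ht : 0 ≤ ⟪r₁, r₂⟫) :
    ∃ v : F, ‖v‖ = 1 ∧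
      ⟪r₁, v⟫ ^ 2 = (1 + ⟪r₁, r₂⟫) / 2 ∧ ⟪r₂, v⟫ ^ 2 = (1 + ⟪r₁, r₂⟫) / 2 := by
  set c := (√(2 + 2 * ⟪r₁, r₂⟫))⁻¹
  have hc : c ^ 2 * (2 + 2 * ⟪r₁, r₂⟫) = 1 := by
    rw [inv_pow, sq_sqrt (by positivity), inv_mul_cancel₀ (by positivity)]
  refine ⟨c • r₁ + c • r₂, ?_, ?_, ?_⟩
  · rw [← pow_left_inj₀ (norm_nonneg _) zero_le_one two_ne_zero, one_pow,
      norm_smul_add_smul_sq h₁ h₂]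
    linear_combination hc
  · rw [inner_smul_add_smul_of_norm_eq_one h₁]
    linear_combination (1 + ⟪r₁, r₂⟫) / 2 * hc
  · rw [add_comm, inner_smul_add_smul_of_norm_eq_one h₂, real_inner_comm]
    linear_combination (1 + ⟪r₁, r₂⟫) / 2 * hc

lemma exists_bisector (h₁ : ‖r₁‖ = 1) (h₂ : ‖r₂‖ = 1) :
    ∃ v : F, ‖v‖ = 1 ∧
      ⟪r₁, v⟫ ^ 2 = (1 + |⟪r₁, r₂⟫|) / 2 ∧ ⟪r₂, v⟫ ^ 2 = (1 + |⟪r₁, r₂⟫|) / 2 := by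
  rcases le_total 0 ⟪r₁, r₂⟫ with ht | ht
  · rw [abs_of_nonneg ht]
    exact exists_bisector_of_inner_nonneg h₁ h₂ ht
  · obtain ⟨v, hv, hv₁, hv₂⟩ := exists_bisector_of_inner_nonneg h₁ ((norm_neg r₂).trans h₂)
      (by rw [inner_neg_right]; linarith)
    rw [inner_neg_right] at hv₁ hv₂
    rw [inner_neg_left, neg_sq] at hv₂
    exact ⟨v, hv, by rw [abs_of_nonpos ht, hv₁], by rw [abs_of_nonpos ht, hv₂]⟩

lemma inner_sq_add_inner_sq_le (h₁ : ‖r₁‖ = 1) (h₂ : ‖r₂‖ = 1) (ht : ⟪r₁, r₂⟫ = 0) (v : F) :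
    ⟪r₁, v⟫ ^ 2 + ⟪r₂, v⟫ ^ 2 ≤ ‖v‖ ^ 2 := by
  have hon : Orthonormal ℝ ![r₁, r₂] := by simp [h₁, h₂, ht]
  simpa [Fin.sum_univ_two] using hon.sum_inner_products_le (s := Finset.univ) v

lemma exists_inner_eq_of_sq_add_sq_eq_one (h₁ : ‖r₁‖ = 1) (h₂ : ‖r₂‖ = 1) (ht : ⟪r₁, r₂⟫ = 0)
    {x y : ℝ} (hxy : x ^ 2 + y ^ 2 = 1) : ∃ v : F, ‖v‖ = 1 ∧ ⟪r₁, v⟫ = x ∧ ⟪r₂, v⟫ = y := by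
  refine ⟨x • r₁ + y • r₂, ?_, ?_, ?_⟩
  · rw [← pow_left_inj₀ (norm_nonneg _) zero_le_one two_ne_zero, one_pow,
      norm_smul_add_smul_sq h₁ h₂, ht]
    linear_combination hxy
  · rw [inner_smul_add_smul_of_norm_eq_one h₁, ht]
    ring
  · rw [add_comm, inner_smul_add_smul_of_norm_eq_one h₂, real_inner_comm, ht]
    ring

end InnerProductSpace

section TwoPoint
variable {F : Type*} [NormedAddCommGroup F] [InnerProductSpace ℝ F] {r₁ r₂ : F} {C p₁ p₂ : ℝ}

lemma exists_sqrt_half_le_twoPoint (h₁ : ‖r₁‖ = 1) (h₂ : ‖r₂‖ = 1) (hC : C ^ 2 ≤ 1)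
    (hp₁ : 0 ≤ p₁) (hp₂ : 0 ≤ p₂) (hp : p₁ + p₂ = 1) :
    ∃ v : F, ‖v‖ = 1 ∧
      √((1 + C ^ 2) / 2) ≤ p₁ * gIntegrand C ⟪r₁, v⟫ + p₂ * gIntegrand C ⟪r₂, v⟫ := by
  obtain ⟨v, hv, hv₁, hv₂⟩ := exists_bisector h₁ h₂
  have hhalf : 1 / 2 ≤ (1 + |⟪r₁, r₂⟫|) / 2 := by linarith [abs_nonneg ⟪r₁, r₂⟫]
  exact ⟨v, hv, convex_Ici √((1 + C ^ 2) / 2)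
    (sqrt_half_le_gIntegrand hC (hhalf.trans_eq hv₁.symm))
    (sqrt_half_le_gIntegrand hC (hhalf.trans_eq hv₂.symm)) hp₁ hp₂ hp⟩

lemma exists_sqrt_half_lt_twoPoint (h₁ : ‖r₁‖ = 1) (h₂ : ‖r₂‖ = 1) (ht : ⟪r₁, r₂⟫ ≠ 0)
    (hC : C ^ 2 < 1) (hp₁ : 0 ≤ p₁) (hp₂ : 0 ≤ p₂) (hp : p₁ + p₂ = 1) :
    ∃ v : F, ‖v‖ = 1 ∧
      √((1 + C ^ 2) / 2) < p₁ * gIntegrand C ⟪r₁, v⟫ + p₂ * gIntegrand C ⟪r₂, v⟫ := by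
  obtain ⟨v, hv, hv₁, hv₂⟩ := exists_bisector h₁ h₂
  have hhalf : 1 / 2 < (1 + |⟪r₁, r₂⟫|) / 2 := by linarith [abs_pos.2 ht]
  exact ⟨v, hv, convex_Ioi √((1 + C ^ 2) / 2)
    (sqrt_half_lt_gIntegrand hC (hhalf.trans_eq hv₁.symm))
    (sqrt_half_lt_gIntegrand hC (hhalf.trans_eq hv₂.symm)) hp₁ hp₂ hp⟩

lemma twoPoint_half_le_sqrt_half (h₁ : ‖r₁‖ = 1) (h₂ : ‖r₂‖ = 1) (ht : ⟪r₁, r₂⟫ = 0)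
    (hC : C ^ 2 ≤ 1) {v : F} (hv : ‖v‖ = 1) :
    1 / 2 * gIntegrand C ⟪r₁, v⟫ + 1 / 2 * gIntegrand C ⟪r₂, v⟫ ≤ √((1 + C ^ 2) / 2) := by
  have hbessel := inner_sq_add_inner_sq_le h₁ h₂ ht v
  rw [hv, one_pow] at hbessel
  linarith [gIntegrand_add_gIntegrand_le hC hbessel]

/-- On the great circle through the orthonormal `r₁, r₂`, the two-point value is
`p₁ √a + p₂ √(1 + C² - a)` with `a` ranging over `[C², 1]`, a neighbourhood of `(1 + C²) / 2`. -/
lemma eq_of_forall_twoPoint_le_sqrt_half (h₁ : ‖r₁‖ = 1) (h₂ : ‖r₂‖ = 1) (ht : ⟪r₁, r₂⟫ = 0)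
    (hC : C ^ 2 < 1) (hp : p₁ + p₂ = 1)
    (hle : ∀ v : F, ‖v‖ = 1 →
      p₁ * gIntegrand C ⟪r₁, v⟫ + p₂ * gIntegrand C ⟪r₂, v⟫ ≤ √((1 + C ^ 2) / 2)) :
    p₁ = p₂ := by
  have hC' : 0 < 1 - C ^ 2 := sub_pos.2 hC
  refine eq_of_isLocalMax_mul_sqrt_add_mul_sqrt (K := 1 + C ^ 2) (by positivity) ?_
  filter_upwards [Icc_mem_nhds (by linarith : C ^ 2 < (1 + C ^ 2) / 2)
    (by linarith : (1 + C ^ 2) / 2 < 1)] with a ha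
  obtain ⟨v, hv, hv₁, hv₂⟩ := exists_inner_eq_of_sq_add_sq_eq_one (F := F) h₁ h₂ ht
    (x := √((a - C ^ 2) / (1 - C ^ 2))) (y := √((1 + C ^ 2 - a - C ^ 2) / (1 - C ^ 2))) (by
      rw [sq_sqrt (div_nonneg (by linarith [ha.1]) hC'.le),
        sq_sqrt (div_nonneg (by linarith [ha.2]) hC'.le)]
      field_simp
      ring)
  have hval := hle v hv
  rw [hv₁, hv₂, gIntegrand_sqrt hC ha.1, gIntegrand_sqrt hC (by linarith [ha.2])] at hval
  calc p₁ * √a + p₂ * √(1 + C ^ 2 - a) ≤ √((1 + C ^ 2) / 2) := hval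
    _ = p₁ * √((1 + C ^ 2) / 2) + p₂ * √(1 + C ^ 2 - (1 + C ^ 2) / 2) := by
      rw [sub_half, ← add_mul, hp, one_mul]

end TwoPoint

lemma integral_smul_dirac_add_smul_dirac {α : Type*} [MeasurableSpace α]
    [MeasurableSingletonClass α] {p₁ p₂ : ℝ} (hp₁ : 0 ≤ p₁) (hp₂ : 0 ≤ p₂) (a₁ a₂ : α)
    (φ : α → ℝ) :
    ∫ x, φ x ∂(ENNReal.ofReal p₁ • Measure.dirac a₁ + ENNReal.ofReal p₂ • Measure.dirac a₂)
      = p₁ * φ a₁ + p₂ * φ a₂ := by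
  rw [integral_add_measure ((integrable_dirac enorm_lt_top).smul_measure ENNReal.ofReal_ne_top)
      ((integrable_dirac enorm_lt_top).smul_measure ENNReal.ofReal_ne_top),
    integral_smul_measure, integral_smul_measure, integral_dirac, integral_dirac,
    ENNReal.toReal_ofReal hp₁, ENNReal.toReal_ofReal hp₂, smul_eq_mul, smul_eq_mul]

instance : Nonempty unitSphere :=
  ⟨⟨EuclideanSpace.single 0 1, by simp [unitSphere]⟩⟩

section TwoPointMeasure
variable {C p₁ p₂ : ℝ} {r₁ r₂ : E3}

lemma g_smul_dirac_add_smul_dirac (hp₁ : 0 ≤ p₁) (hp₂ : 0 ≤ p₂) :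
    g C (ENNReal.ofReal p₁ • Measure.dirac r₁ + ENNReal.ofReal p₂ • Measure.dirac r₂)
      = ⨆ v : unitSphere, (p₁ * gIntegrand C ⟪r₁, v⟫ + p₂ * gIntegrand C ⟪r₂, v⟫) :=
  iSup_congr fun _ => integral_smul_dirac_add_smul_dirac hp₁ hp₂ r₁ r₂ _

lemma le_iSup_twoPoint (h₁ : ‖r₁‖ = 1) (h₂ : ‖r₂‖ = 1) (hC : C ^ 2 ≤ 1) (hp₁ : 0 ≤ p₁)
    (hp₂ : 0 ≤ p₂) (hp : p₁ + p₂ = 1) {v : E3} (hv : ‖v‖ = 1) :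
    p₁ * gIntegrand C ⟪r₁, v⟫ + p₂ * gIntegrand C ⟪r₂, v⟫
      ≤ ⨆ w : unitSphere, (p₁ * gIntegrand C ⟪r₁, w⟫ + p₂ * gIntegrand C ⟪r₂, w⟫) := by
  have hle_one : ∀ {r w : E3}, ‖r‖ = 1 → ‖w‖ = 1 → gIntegrand C ⟪r, w⟫ ≤ 1 := fun hr hw =>
    gIntegrand_le_one hC <| (sq_le_one_iff_abs_le_one _).2 <|
      (abs_real_inner_le_norm _ _).trans (by rw [hr, hw, one_mul])
  refine le_ciSup
    (f := fun w : unitSphere => p₁ * gIntegrand C ⟪r₁, w⟫ + p₂ * gIntegrand C ⟪r₂, w⟫)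
    ⟨1, ?_⟩ ⟨v, mem_sphere_zero_iff_norm.2 hv⟩
  rintro _ ⟨w, rfl⟩
  have hw : ‖(w : E3)‖ = 1 := mem_sphere_zero_iff_norm.1 w.2
  exact convex_Iic (1 : ℝ) (hle_one h₁ hw) (hle_one h₂ hw) hp₁ hp₂ hp

end TwoPointMeasure

/-- For a two-point probability measure `μ = p₁ δ_{r₁} + p₂ δ_{r₂}` on the unit sphere S² of ℝ³
and every `C ∈ [0,1]`, `g(C,μ) ≥ √((1+C²)/2)`; moreover, for `0 ≤ C < 1`, equality holds iff
`r₁ ⊥ r₂` and `p₁ = p₂ = 1/2`. -/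
theorem g_two_settings_optimal (r₁ r₂ : E3) (h₁ : ‖r₁‖ = 1) (h₂ : ‖r₂‖ = 1)
    (p₁ p₂ : ℝ) (hp₁ : 0 ≤ p₁) (hp₂ : 0 ≤ p₂) (hp : p₁ + p₂ = 1) :
    (∀ C ∈ Set.Icc (0 : ℝ) 1,
      Real.sqrt ((1 + C ^ 2) / 2)
        ≤ g C (ENNReal.ofReal p₁ • Measure.dirac r₁ + ENNReal.ofReal p₂ • Measure.dirac r₂)) ∧
    ∀ C : ℝ, 0 ≤ C → C < 1 →
      (g C (ENNReal.ofReal p₁ • Measure.dirac r₁ + ENNReal.ofReal p₂ • Measure.dirac r₂)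
          = Real.sqrt ((1 + C ^ 2) / 2)
        ↔ (inner ℝ r₁ r₂ : ℝ) = 0 ∧ p₁ = 1 / 2 ∧ p₂ = 1 / 2) := by
  have hlower : ∀ C : ℝ, C ^ 2 ≤ 1 → √((1 + C ^ 2) / 2)
      ≤ g C (ENNReal.ofReal p₁ • Measure.dirac r₁ + ENNReal.ofReal p₂ • Measure.dirac r₂) := by
    intro C hC
    obtain ⟨v, hv, hle⟩ := exists_sqrt_half_le_twoPoint h₁ h₂ hC hp₁ hp₂ hp
    rw [g_smul_dirac_add_smul_dirac hp₁ hp₂]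
    exact hle.trans (le_iSup_twoPoint h₁ h₂ hC hp₁ hp₂ hp hv)
  refine ⟨fun C hC => hlower C (by nlinarith [hC.1, hC.2]), fun C hC₀ hC₁ => ?_⟩
  have hC : C ^ 2 < 1 := by nlinarith
  refine ⟨fun heq => ?_, fun ⟨ht, hp₁_eq, hp₂_eq⟩ => le_antisymm ?_ (hlower C hC.le)⟩
  · rw [g_smul_dirac_add_smul_dirac hp₁ hp₂] at heq
    have hle := fun (v : E3) (hv : ‖v‖ = 1) =>
      heq ▸ le_iSup_twoPoint h₁ h₂ hC.le hp₁ hp₂ hp hv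
    have ht : ⟪r₁, r₂⟫ = 0 := by
      by_contra ht
      obtain ⟨v, hv, hlt⟩ := exists_sqrt_half_lt_twoPoint h₁ h₂ ht hC hp₁ hp₂ hp
      exact (hlt.trans_le (hle v hv)).false
    have hp_eq := eq_of_forall_twoPoint_le_sqrt_half h₁ h₂ ht hC hp hle
    exact ⟨ht, by linarith, by linarith⟩
  · rw [g_smul_dirac_add_smul_dirac hp₁ hp₂, hp₁_eq, hp₂_eq]
    exact ciSup_le fun v =>
      twoPoint_half_le_sqrt_half h₁ h₂ ht hC.le (mem_sphere_zero_iff_norm.1 v.2)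
end
end

section
/- Let μ₃ be the uniform distribution on the three vertices r_j = (cos(2π(j−1)/3), sin(2π(j−1)/3), 0), j = 1,2,3, of a regular triangle inscribed in the equator of the unit sphere S² of ℝ³. Then for every C ∈ [0,1], g(C,μ₃) = (1 + √(1 + 3C²))/3; in particular g*(μ₃) = 2/3. -/
open MeasureTheory Real
open scoped ENNReal

noncomputable section

/-- The point `(cos φ, sin φ, 0)` on the equator of the unit sphere. -/
def eqPt (φ : ℝ) : E3 := (WithLp.equiv 2 (Fin 3 → ℝ)).symm ![Real.cos φ, Real.sin φ, 0]

/-- The uniform probability measure on the equator: the pushforward of the normalized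
Lebesgue measure on `[0, 2π)` under `φ ↦ (cos φ, sin φ, 0)`. -/
def equatorUniform : Measure E3 :=
  Measure.map eqPt ((ENNReal.ofReal (2 * π))⁻¹ • volume.restrict (Set.Ico 0 (2 * π)))

/-!
For a unit vector `v`, write `uⱼ = ⟨rⱼ, v⟩²`. The map `u ↦ √(C² + (1 - C²) u)` is bounded on
`[0, 1]` by a quadratic that agrees with it at `u = 1` and touches it at `u = 1/4`, the
values of `uⱼ` at the maximiser `v = r₁`. Because the `rⱼ` form a regular triangle,
`∑ uⱼ = (3/2) w` and `∑ uⱼ² = (9/8) w²` with `w = v₁² + v₂² ≤ 1`, so the sum of the three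
quadratic bounds is a polynomial in `w` alone, which is at most `1 + √(1 + 3C²)` on `[0, 1]`.
-/

section QuadraticMajorant

variable {D : ℝ}

def quadMajorant (D u : ℝ) : ℝ :=
  ((5 * D - 4) * (D + 1) - (D - 2) * (D + 10) * u - 4 * (D - 2) ^ 2 * u ^ 2) / (9 * D)

lemma sqrt_le_quadMajorant {C u : ℝ} (hD1 : 1 ≤ D) (hD2 : D ≤ 2)
    (hC : C ^ 2 = (D ^ 2 - 1) / 3) (hu0 : 0 ≤ u) (hu1 : u ≤ 1) :
    √(C ^ 2 + (1 - C ^ 2) * u) ≤ quadMajorant D u := by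
  have hD : 0 < 9 * D := by linarith
  have hq_nonneg : 0 ≤ quadMajorant D u := by
    refine div_nonneg ?_ hD.le
    have key : (5 * D - 4) * (D + 1) - (D - 2) * (D + 10) * u - 4 * (D - 2) ^ 2 * u ^ 2
        = (1 - u) * ((5 * D - 4) * (D + 1)) + u * (9 * D)
          + 4 * (D - 2) ^ 2 * (u * (1 - u)) := by
      ring
    rw [key]
    have : 0 ≤ (5 * D - 4) * (D + 1) := by nlinarith
    have : 0 ≤ 1 - u := by linarith
    positivity
  have gap : (quadMajorant D u * (9 * D)) ^ 2 - (C ^ 2 + (1 - C ^ 2) * u) * (9 * D) ^ 2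
      = 16 * (2 - D) ^ 3 * (1 - u) * (2 * (D + 1) - (2 - D) * u) * (u - 1 / 4) ^ 2 := by
    rw [quadMajorant, div_mul_cancel₀ _ hD.ne', hC]; ring
  have gap_nonneg :
      0 ≤ 16 * (2 - D) ^ 3 * (1 - u) * (2 * (D + 1) - (2 - D) * u) * (u - 1 / 4) ^ 2 := by
    have : 0 ≤ 2 - D := by linarith
    have : 0 ≤ 1 - u := by linarith
    have : 0 ≤ 2 * (D + 1) - (2 - D) * u := by nlinarith
    positivity
  refine Real.sqrt_le_iff.mpr ⟨hq_nonneg, ?_⟩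
  have hD_sq : 0 < (9 * D) ^ 2 := by positivity
  nlinarith [mul_pow (quadMajorant D u) (9 * D) 2]

lemma quadMajorant_add_add_le {a b c w : ℝ} (hD1 : 1 ≤ D) (hD2 : D ≤ 2)
    (h1 : a + b + c = 3 / 2 * w) (h2 : a ^ 2 + b ^ 2 + c ^ 2 = 9 / 8 * w ^ 2)
    (hw1 : w ≤ 1) :
    quadMajorant D a + quadMajorant D b + quadMajorant D c ≤ 1 + D := by
  have hD : 0 < 9 * D := by linarith
  have hsum : quadMajorant D a + quadMajorant D b + quadMajorant D c
      = (3 * ((5 * D - 4) * (D + 1)) - (D - 2) * (D + 10) * (3 / 2 * w)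
          - 4 * (D - 2) ^ 2 * (9 / 8 * w ^ 2)) / (9 * D) := by
    simp only [quadMajorant]; rw [← h1, ← h2]; ring
  rw [hsum, div_le_iff₀ hD]
  nlinarith [mul_nonneg (mul_nonneg (by linarith : (0:ℝ) ≤ 2 - D)
      (by linarith : (0:ℝ) ≤ 7 * D - 2)) (by linarith : (0:ℝ) ≤ 1 - w),
    mul_nonneg (sq_nonneg (2 - D)) (sq_nonneg (1 - w))]

end QuadraticMajorant

lemma inner_eqPt (φ : ℝ) (v : E3) : inner ℝ (eqPt φ) v = cos φ * v 0 + sin φ * v 1 := by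
  simp [PiLp.inner_apply, Fin.sum_univ_three, eqPt, mul_comm]

lemma norm_eqPt (φ : ℝ) : ‖eqPt φ‖ = 1 := by
  simp [EuclideanSpace.norm_eq, Fin.sum_univ_three, eqPt]

lemma eqPt_mem_unitSphere (φ : ℝ) : eqPt φ ∈ unitSphere := by
  simp [unitSphere, norm_eqPt]

lemma cos_two_pi_div_three : cos (2 * π / 3) = -(1 / 2) := by
  rw [show 2 * π / 3 = π - π / 3 by ring, cos_pi_sub, cos_pi_div_three]

lemma sin_two_pi_div_three : sin (2 * π / 3) = √3 / 2 := by
  rw [show 2 * π / 3 = π - π / 3 by ring, sin_pi_sub, sin_pi_div_three]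

lemma cos_four_pi_div_three : cos (4 * π / 3) = -(1 / 2) := by
  rw [show 4 * π / 3 = π / 3 + π by ring, cos_add_pi, cos_pi_div_three]

lemma sin_four_pi_div_three : sin (4 * π / 3) = -(√3 / 2) := by
  rw [show 4 * π / 3 = π / 3 + π by ring, sin_add_pi, sin_pi_div_three]

lemma inner_eqPt_two_pi_div_three (v : E3) :
    inner ℝ (eqPt (2 * π / 3)) v = -(v 0 / 2) + √3 / 2 * v 1 := by
  rw [inner_eqPt, cos_two_pi_div_three, sin_two_pi_div_three]; ring

lemma inner_eqPt_four_pi_div_three (v : E3) :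
    inner ℝ (eqPt (4 * π / 3)) v = -(v 0 / 2) - √3 / 2 * v 1 := by
  rw [inner_eqPt, cos_four_pi_div_three, sin_four_pi_div_three]; ring

lemma sum_sq_inner_eqPt (v : E3) :
    inner ℝ (eqPt 0) v ^ 2 + inner ℝ (eqPt (2 * π / 3)) v ^ 2
      + inner ℝ (eqPt (4 * π / 3)) v ^ 2 = 3 / 2 * (v 0 ^ 2 + v 1 ^ 2) := by
  have h3 : √3 ^ 2 = 3 := Real.sq_sqrt (by norm_num)
  rw [inner_eqPt, inner_eqPt_two_pi_div_three, inner_eqPt_four_pi_div_three]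
  simp only [cos_zero, sin_zero]
  linear_combination (v 1 ^ 2 / 2) * h3

lemma sum_sq_sq_inner_eqPt (v : E3) :
    (inner ℝ (eqPt 0) v ^ 2) ^ 2 + (inner ℝ (eqPt (2 * π / 3)) v ^ 2) ^ 2
      + (inner ℝ (eqPt (4 * π / 3)) v ^ 2) ^ 2 = 9 / 8 * (v 0 ^ 2 + v 1 ^ 2) ^ 2 := by
  have h3 : √3 ^ 2 = 3 := Real.sq_sqrt (by norm_num)
  rw [inner_eqPt, inner_eqPt_two_pi_div_three, inner_eqPt_four_pi_div_three]
  simp only [cos_zero, sin_zero]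
  linear_combination (3 / 4 * v 0 ^ 2 * v 1 ^ 2 + (√3 ^ 2 + 3) / 8 * v 1 ^ 4) * h3

lemma sq_inner_le_one_s16 {r v : E3} (hr : r ∈ unitSphere) (hv : v ∈ unitSphere) :
    inner ℝ r v ^ 2 ≤ 1 := by
  rw [unitSphere, mem_sphere_zero_iff_norm] at hr hv
  rw [sq_le_one_iff_abs_le_one]
  simpa [hr, hv] using abs_real_inner_le_norm r v

lemma sq_add_sq_le_one {v : E3} (hv : v ∈ unitSphere) : v 0 ^ 2 + v 1 ^ 2 ≤ 1 := by
  have hv : ‖v‖ ^ 2 = 1 := by simp_all [unitSphere]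
  rw [EuclideanSpace.norm_sq_eq, Fin.sum_univ_three] at hv
  simp only [Real.norm_eq_abs, sq_abs] at hv
  nlinarith [sq_nonneg (v 2)]

lemma integral_uniform_three {α : Type*} [MeasurableSpace α] [MeasurableSingletonClass α]
    (f : α → ℝ) (a b c : α) :
    ∫ x, f x ∂((3 : ℝ≥0∞)⁻¹ • (Measure.dirac a + Measure.dirac b + Measure.dirac c))
      = (f a + f b + f c) / 3 := by
  have hf : ∀ x : α, Integrable f (Measure.dirac x) := fun x ↦ integrable_dirac (by simp)
  rw [integral_smul_measure, integral_add_measure ((hf a).add_measure (hf b)) (hf c),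
    integral_add_measure (hf a) (hf b), integral_dirac, integral_dirac, integral_dirac]
  simp [div_eq_inv_mul]

lemma g_eq_of_le_of_eq {C M : ℝ} {μ : Measure E3} {v₀ : E3} (hv₀ : v₀ ∈ unitSphere)
    (hle : ∀ v ∈ unitSphere, ∫ r, √(C ^ 2 + (1 - C ^ 2) * inner ℝ r v ^ 2) ∂μ ≤ M)
    (heq : ∫ r, √(C ^ 2 + (1 - C ^ 2) * inner ℝ r v₀ ^ 2) ∂μ = M) :
    g C μ = M :=
  have : Nonempty unitSphere := ⟨⟨v₀, hv₀⟩⟩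
  ciSup_eq_of_forall_le_of_forall_lt_exists_gt (fun v ↦ hle v v.2)
    fun _ hw ↦ ⟨⟨v₀, hv₀⟩, heq ▸ hw⟩

def triangleMeasure : Measure E3 :=
  (3 : ℝ≥0∞)⁻¹ • (Measure.dirac (eqPt 0) + Measure.dirac (eqPt (2 * π / 3))
    + Measure.dirac (eqPt (4 * π / 3)))

lemma integral_triangleMeasure_le {C D : ℝ} (hD1 : 1 ≤ D) (hD2 : D ≤ 2)
    (hC : C ^ 2 = (D ^ 2 - 1) / 3) {v : E3} (hv : v ∈ unitSphere) :
    ∫ r, √(C ^ 2 + (1 - C ^ 2) * inner ℝ r v ^ 2) ∂triangleMeasure ≤ (1 + D) / 3 := by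
  rw [triangleMeasure, integral_uniform_three]
  refine div_le_div_of_nonneg_right ?_ (by norm_num)
  have bound (φ : ℝ) := sqrt_le_quadMajorant hD1 hD2 hC (sq_nonneg _)
    (sq_inner_le_one_s16 (eqPt_mem_unitSphere φ) hv)
  calc _ ≤ quadMajorant D (inner ℝ (eqPt 0) v ^ 2)
        + quadMajorant D (inner ℝ (eqPt (2 * π / 3)) v ^ 2)
        + quadMajorant D (inner ℝ (eqPt (4 * π / 3)) v ^ 2) :=
        add_le_add (add_le_add (bound _) (bound _)) (bound _)
    _ ≤ 1 + D := quadMajorant_add_add_le hD1 hD2 (sum_sq_inner_eqPt v) (sum_sq_sq_inner_eqPt v)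
        (sq_add_sq_le_one hv)

lemma integral_triangleMeasure_eqPt_zero {C D : ℝ} (hD : 0 ≤ D)
    (hC : C ^ 2 = (D ^ 2 - 1) / 3) :
    ∫ r, √(C ^ 2 + (1 - C ^ 2) * inner ℝ r (eqPt 0) ^ 2) ∂triangleMeasure = (1 + D) / 3 := by
  have h_one : √(C ^ 2 + (1 - C ^ 2) * 1) = 1 := by
    rw [show C ^ 2 + (1 - C ^ 2) * 1 = 1 by ring, Real.sqrt_one]
  have h_half : √(C ^ 2 + (1 - C ^ 2) * (-(1 / 2)) ^ 2) = D / 2 := by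
    rw [show C ^ 2 + (1 - C ^ 2) * (-(1 / 2)) ^ 2 = (D / 2) ^ 2 by rw [hC]; ring]
    exact Real.sqrt_sq (by positivity)
  have h0 : (eqPt 0) 0 = 1 := by simp [eqPt]
  have h1 : (eqPt 0) 1 = 0 := by simp [eqPt]
  rw [triangleMeasure, integral_uniform_three, inner_eqPt_two_pi_div_three,
    inner_eqPt_four_pi_div_three, real_inner_self_eq_norm_sq, norm_eqPt, h0, h1, mul_zero,
    add_zero, sub_zero, one_pow, one_pow, h_one, h_half]
  ring

lemma g_triangleMeasure {C : ℝ} (hC : C ∈ Set.Icc (0 : ℝ) 1) :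
    g C triangleMeasure = (1 + √(1 + 3 * C ^ 2)) / 3 := by
  set D := √(1 + 3 * C ^ 2)
  have hD : D ^ 2 = 1 + 3 * C ^ 2 := Real.sq_sqrt (by positivity)
  have hD1 : 1 ≤ D := Real.le_sqrt_of_sq_le (by nlinarith)
  have hD2 : D ≤ 2 := Real.sqrt_le_iff.mpr ⟨by norm_num, by nlinarith [hC.1, hC.2]⟩
  have hCD : C ^ 2 = (D ^ 2 - 1) / 3 := by rw [hD]; ring
  exact g_eq_of_le_of_eq (eqPt_mem_unitSphere 0)
    (fun v hv ↦ integral_triangleMeasure_le hD1 hD2 hCD hv)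
    (integral_triangleMeasure_eqPt_zero (by positivity) hCD)

/-- Let `μ₃` be the uniform distribution on the three vertices of a regular triangle inscribed
in the equator of the unit sphere S² of ℝ³.  Then for every `C ∈ [0,1]`,
`g(C,μ₃) = (1 + √(1+3C²))/3`; in particular `g*(μ₃) = g(0,μ₃) = 2/3`. -/
theorem g_triangle (C : ℝ) (hC : C ∈ Set.Icc (0 : ℝ) 1) :
    g C ((3 : ℝ≥0∞)⁻¹ • (Measure.dirac (eqPt 0) + Measure.dirac (eqPt (2 * π / 3))
        + Measure.dirac (eqPt (4 * π / 3))))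
      = (1 + Real.sqrt (1 + 3 * C ^ 2)) / 3 ∧
    g 0 ((3 : ℝ≥0∞)⁻¹ • (Measure.dirac (eqPt 0) + Measure.dirac (eqPt (2 * π / 3))
        + Measure.dirac (eqPt (4 * π / 3))))
      = 2 / 3 :=
  ⟨g_triangleMeasure hC, (g_triangleMeasure ⟨le_rfl, zero_le_one⟩).trans (by norm_num)⟩
end
end
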